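/- arXiv:1101.3745 — 2 statements merged into one kernel-verified Lean document; each statement's English description precedes it below -/
import Mathlib

section
/- Let P be a vector space partition of a 2t-dimensional vector space V over the finite field F with q elements, let a be the integer with m_t = q^t + 1 − a, and let d be an integer with t/2 < d < t, where m_d denotes the number of members of P of dimension d. If there exists a t-spread S of V that contains every t-dimensional member of P, then a ≥ min(m_d, q^{⌈d/2⌉} + 1). -/
attribute [local instance] Classical.propDecidable

/-- A vector space partition: a finite set of nonzero subspaces such that every
nonzero vector lies in exactly one member. -/
def IsVSPartition (F : Type*) {V : Type*} [Field F] [AddCommGroup V] [Module F V]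
    (P : Finset (Submodule F V)) : Prop :=
  (∀ U ∈ P, U ≠ ⊥) ∧ ∀ v : V, v ≠ 0 → ∃! U : Submodule F V, U ∈ P ∧ v ∈ U

/-- The number `m_d` of members of `P` of dimension `d`. -/
noncomputable def dimCount (F : Type*) {V : Type*} [Field F] [AddCommGroup V] [Module F V]
    (P : Finset (Submodule F V)) (d : ℕ) : ℕ :=
  (P.filter fun (U : Submodule F V) => Module.finrank F ↥U = d).card

/-- A partial `t`-spread: a set of `t`-dimensional subspaces, any two distinct members
of which intersect in the zero subspace. -/
def IsPartialSpread (F : Type*) {V : Type*} [Field F] [AddCommGroup V] [Module F V]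
    (t : ℕ) (S : Finset (Submodule F V)) : Prop :=
  (∀ U ∈ S, Module.finrank F ↥U = t) ∧ ∀ U ∈ S, ∀ U' ∈ S, U ≠ U' → U ⊓ U' = ⊥

/-- A `t`-spread: a partial `t`-spread that is also a vector space partition. -/
def IsSpread (F : Type*) {V : Type*} [Field F] [AddCommGroup V] [Module F V]
    (t : ℕ) (S : Finset (Submodule F V)) : Prop :=
  IsPartialSpread F t S ∧ IsVSPartition F S

/-!
The members of the spread `S` outside `P` (the holes) number exactly `a`, because
`|S| = q^t + 1` and the members of `P ∩ S` are the `t`-dimensional members of `P`. A member `U`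
of `P` of dimension `d ≠ t` is not in `S`, so the holes partition its nonzero vectors. If every
such `U` lies inside a hole, distinct ones lie in distinct holes since `2d > t`, whence
`m_d ≤ a`. Otherwise the holes cut some `U` into a nontrivial vector space partition of a
`d`-dimensional space, and such a partition has at least `q^⌈d/2⌉ + 1` members: counting vectors,
if its largest member has dimension `e` it has at least `q^e + 1` and at least `q^(d-e) + 1`
members.
-/

open Module Finset

section

variable {F V : Type*} [Field F] [AddCommGroup V] [Module F V]

theorem Submodule.finrank_add_finrank_le_of_disjoint_of_le [FiniteDimensional F V]
    {Y Y' W : Submodule F V} (h : Disjoint Y Y') (hY : Y ≤ W) (hY' : Y' ≤ W) :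
    finrank F Y + finrank F Y' ≤ finrank F W := by
  rw [← Submodule.finrank_sup_add_finrank_inf_eq, h.eq_bot, finrank_bot, add_zero]
  exact Submodule.finrank_mono (sup_le hY hY')

namespace IsVSPartition

variable {P : Finset (Submodule F V)}

theorem disjoint (hP : IsVSPartition F P) {U U' : Submodule F V} (hU : U ∈ P) (hU' : U' ∈ P)
    (hne : U ≠ U') : Disjoint U U' := by
  refine Submodule.disjoint_def.2 fun v hv hv' => ?_
  by_contra hv0
  obtain ⟨W, -, huniq⟩ := hP.2 v hv0
  exact hne ((huniq U ⟨hU, hv⟩).trans (huniq U' ⟨hU', hv'⟩).symm)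

theorem finrank_pos [FiniteDimensional F V] (hP : IsVSPartition F P) {U : Submodule F V}
    (hU : U ∈ P) : 0 < finrank F U :=
  Nat.pos_iff_ne_zero.2 fun h => hP.1 U hU (Submodule.finrank_eq_zero.1 h)

theorem existsUnique_mem_sdiff {S : Finset (Submodule F V)}
    (hP : IsVSPartition F P) (hS : IsVSPartition F S) {U : Submodule F V} (hU : U ∈ P)
    (hUS : U ∉ S) {v : V} (hv : v ∈ U) (hv0 : v ≠ 0) : ∃! W, W ∈ S \ P ∧ v ∈ W := by
  obtain ⟨W, ⟨hWS, hvW⟩, huniq⟩ := hS.2 v hv0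
  have hWP : W ∉ P := fun hWP => hUS (((hP.2 v hv0).unique ⟨hWP, hvW⟩ ⟨hU, hv⟩) ▸ hWS)
  exact ⟨W, ⟨mem_sdiff.2 ⟨hWS, hWP⟩, hvW⟩, fun W' hW' => huniq W' ⟨(mem_sdiff.1 hW'.1).1, hW'.2⟩⟩

theorem dimCount_le_card [FiniteDimensional F V] {H : Finset (Submodule F V)}
    (hP : IsVSPartition F P) {d : ℕ} (hH : ∀ W ∈ H, finrank F W < 2 * d)
    (hcov : ∀ U ∈ P, finrank F U = d → ∃ W ∈ H, U ≤ W) : dimCount F P d ≤ #H := by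
  refine card_le_card_of_forall_subsingleton (· ≤ ·) (fun U hU => hcov U (mem_filter.1 hU).1
    (mem_filter.1 hU).2) fun W hW U hU U' hU' => ?_
  obtain ⟨hU, hUW⟩ := hU
  obtain ⟨hU', hU'W⟩ := hU'
  rw [mem_filter] at hU hU'
  by_contra hne
  have := Submodule.finrank_add_finrank_le_of_disjoint_of_le (hP.disjoint hU.1 hU'.1 hne) hUW hU'W
  have := hH W hW
  omega

theorem sum_natCard_sub_one [Finite V] (hP : IsVSPartition F P) :
    ∑ U ∈ P, ((Nat.card U : ℤ) - 1) = Nat.card V - 1 := by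
  have : Fintype V := Fintype.ofFinite V
  have hcover : univ.erase (0 : V) = P.biUnion fun U => (univ.filter (· ∈ U)).erase 0 := by
    ext v
    simp only [mem_erase, mem_univ, and_true, mem_biUnion, mem_filter, true_and]
    exact ⟨fun hv => (hP.2 v hv).exists.imp fun U hU => ⟨hU.1, hv, hU.2⟩,
      fun ⟨_, _, hv, _⟩ => hv⟩
  have hdisj :
      (P : Set (Submodule F V)).PairwiseDisjoint fun U => (univ.filter (· ∈ U)).erase 0 := by
    intro U hU U' hU' hne
    refine disjoint_left.2 fun v hv hv' => ?_
    simp only [mem_erase, mem_filter, mem_univ, true_and] at hv hv'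
    exact hv.1 ((Submodule.disjoint_def.1 (hP.disjoint hU hU' hne)) v hv.2 hv'.2)
  have hcard : ∀ U : Submodule F V, #((univ.filter (· ∈ U)).erase 0) = (Nat.card U : ℤ) - 1 := by
    intro U
    rw [card_erase_of_mem (by simp), ← Fintype.card_subtype, Nat.card_eq_fintype_card,
      Nat.cast_sub Fintype.card_pos, Nat.cast_one]
  rw [Nat.card_eq_fintype_card, ← card_univ, ← card_erase_add_one (mem_univ (0 : V)), hcover,
    card_biUnion hdisj, Nat.cast_add, Nat.cast_sum, Nat.cast_one, add_sub_cancel_right]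
  exact sum_congr rfl fun U _ => (hcard U).symm

theorem sum_pow_finrank_sub_one [Fintype F] [FiniteDimensional F V] (hP : IsVSPartition F P) :
    ∑ U ∈ P, ((Fintype.card F : ℤ) ^ finrank F U - 1) = (Fintype.card F : ℤ) ^ finrank F V - 1 := by
  have : Finite V := Module.finite_of_finite F
  have hcard (W : Submodule F V) : (Nat.card W : ℤ) = (Fintype.card F : ℤ) ^ finrank F W := by
    rw [Module.natCard_eq_pow_finrank (K := F), Nat.card_eq_fintype_card, Nat.cast_pow]
  simp only [← hcard]
  rw [← Nat.cast_pow, ← Nat.card_eq_fintype_card, ← Module.natCard_eq_pow_finrank]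
  exact hP.sum_natCard_sub_one

variable [Fintype F] [FiniteDimensional F V] {P : Finset (Submodule F V)}

theorem pow_finrank_add_one_le_card (hP : IsVSPartition F P) {U₀ : Submodule F V}
    (hU₀ : U₀ ∈ P) (hU₀top : U₀ ≠ ⊤) : Fintype.card F ^ finrank F U₀ + 1 ≤ #P := by
  set q := Fintype.card F
  set n := finrank F V
  set e := finrank F U₀
  have hq : 1 < q := Fintype.one_lt_card
  have he : e < n := Submodule.finrank_lt hU₀top
  have hother : ∀ U ∈ P.erase U₀, (q : ℤ) ^ finrank F U - 1 ≤ q ^ (n - e) - 1 := by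
    intro U hU
    have := Submodule.finrank_add_finrank_le_of_disjoint
      (hP.disjoint (mem_of_mem_erase hU) hU₀ (ne_of_mem_erase hU))
    gcongr
    · exact_mod_cast hq.le
    · omega
  have hsum := hP.sum_pow_finrank_sub_one
  rw [← add_sum_erase P _ hU₀] at hsum
  have hle := sum_le_card_nsmul (P.erase U₀) _ _ hother
  rw [card_erase_of_mem hU₀, nsmul_eq_mul, Nat.cast_pred (card_pos.2 ⟨U₀, hU₀⟩)] at hle
  have hpow : (q : ℤ) ^ n = q ^ e * q ^ (n - e) := by rw [← pow_add, Nat.add_sub_cancel' he.le]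
  have hY : (2 : ℤ) ≤ q ^ (n - e) :=
    le_self_pow₀ (by exact_mod_cast hq.le) (by omega) |>.trans' (by exact_mod_cast hq)
  -- `q^e (q^(n-e) - 1) = q^n - q^e ≤ (#P - 1) (q^(n-e) - 1)`
  have : (q : ℤ) ^ e + 1 ≤ #P := by nlinarith
  exact_mod_cast this

theorem pow_finrank_sub_add_one_le_card (hP : IsVSPartition F P) {U₀ : Submodule F V}
    (hU₀ : U₀ ∈ P) (hU₀top : U₀ ≠ ⊤) (hmax : ∀ U ∈ P, finrank F U ≤ finrank F U₀) :
    Fintype.card F ^ (finrank F V - finrank F U₀) + 1 ≤ #P := by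
  set q := Fintype.card F
  set n := finrank F V
  set e := finrank F U₀
  have hq : 1 < q := Fintype.one_lt_card
  have he : e < n := Submodule.finrank_lt hU₀top
  have hterm : ∀ U ∈ P, (q : ℤ) ^ finrank F U - 1 ≤ q ^ e - 1 := fun U hU => by
    gcongr
    · exact_mod_cast hq.le
    · exact hmax U hU
  have hle := sum_le_card_nsmul P _ _ hterm
  rw [hP.sum_pow_finrank_sub_one, nsmul_eq_mul] at hle
  have hpow : (q : ℤ) ^ n = q ^ e * q ^ (n - e) := by rw [← pow_add, Nat.add_sub_cancel' he.le]
  have hX : (2 : ℤ) ≤ q ^ e :=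
    le_self_pow₀ (by exact_mod_cast hq.le) (hP.finrank_pos hU₀).ne' |>.trans' (by exact_mod_cast hq)
  have hY : (2 : ℤ) ≤ q ^ (n - e) :=
    le_self_pow₀ (by exact_mod_cast hq.le) (by omega) |>.trans' (by exact_mod_cast hq)
  -- `#P (q^e - 1) ≥ q^n - 1 > q^(n-e) (q^e - 1)`
  have : (q : ℤ) ^ (n - e) + 1 ≤ #P := by nlinarith
  exact_mod_cast this

theorem pow_add_one_le_card (hP : IsVSPartition F P) (htop : ⊤ ∉ P) (hV : 0 < finrank F V) :
    Fintype.card F ^ ((finrank F V + 1) / 2) + 1 ≤ #P := by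
  have : Nontrivial V := Module.finrank_pos_iff.1 hV
  obtain ⟨v, hv⟩ := exists_ne (0 : V)
  obtain ⟨U, ⟨hU, -⟩, -⟩ := hP.2 v hv
  obtain ⟨U₀, hU₀, hmax⟩ := exists_max_image P (finrank F ·) ⟨U, hU⟩
  have hU₀top : U₀ ≠ ⊤ := fun h => htop (h ▸ hU₀)
  have hq : 1 ≤ Fintype.card F := Fintype.card_pos
  rcases le_or_gt ((finrank F V + 1) / 2) (finrank F U₀) with h | h
  · exact (Nat.pow_le_pow_right hq h).trans_lt (hP.pow_finrank_add_one_le_card hU₀ hU₀top)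
  · have h' : (finrank F V + 1) / 2 ≤ finrank F V - finrank F U₀ := by
      have := Submodule.finrank_lt hU₀top; omega
    exact (Nat.pow_le_pow_right hq h').trans_lt
      (hP.pow_finrank_sub_add_one_le_card hU₀ hU₀top hmax)

end IsVSPartition

theorem IsPartialSpread.card_sdiff_add_dimCount {t : ℕ} {P S : Finset (Submodule F V)}
    (hS : IsPartialSpread F t S) (hPS : ∀ U ∈ P, finrank F U = t → U ∈ S) :
    #(S \ P) + dimCount F P t = #S := by
  have hinter : S ∩ P = P.filter fun U : Submodule F V => finrank F U = t := by
    ext U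
    simp only [mem_inter, mem_filter]
    exact ⟨fun h => ⟨h.2, hS.1 U h.1⟩, fun h => ⟨hPS U h.1 h.2, h.1⟩⟩
  rw [dimCount, ← hinter, card_sdiff_add_card_inter]

theorem IsSpread.card_eq [Fintype F] [FiniteDimensional F V] {t : ℕ} {S : Finset (Submodule F V)}
    (hS : IsSpread F t S) (hV : finrank F V = 2 * t) (ht : 0 < t) :
    #S = Fintype.card F ^ t + 1 := by
  set q := Fintype.card F
  have hsum := hS.2.sum_pow_finrank_sub_one
  rw [sum_congr rfl fun U hU => by rw [hS.1.1 U hU], sum_const, nsmul_eq_mul, hV, pow_mul',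
    sq, mul_self_sub_one] at hsum
  have hqt : (q : ℤ) ^ t - 1 ≠ 0 := by
    have : (2 : ℤ) ≤ q ^ t :=
      le_self_pow₀ (by exact_mod_cast Fintype.card_pos) ht.ne' |>.trans'
        (by exact_mod_cast Fintype.one_lt_card)
    omega
  exact_mod_cast mul_right_cancel₀ hqt hsum

noncomputable def traceOn (H : Finset (Submodule F V)) (U : Submodule F V) :
    Finset (Submodule F U) :=
  (H.image (Submodule.comap U.subtype)).erase ⊥

theorem card_traceOn_le (H : Finset (Submodule F V)) (U : Submodule F V) :
    #(traceOn H U) ≤ #H :=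
  (card_erase_le).trans card_image_le

theorem isVSPartition_traceOn {H : Finset (Submodule F V)} {U : Submodule F V}
    (hH : ∀ v ∈ U, v ≠ 0 → ∃! W, W ∈ H ∧ v ∈ W) : IsVSPartition F (traceOn H U) := by
  refine ⟨fun Y hY => (mem_erase.1 hY).1, fun x hx => ?_⟩
  have hx' : (x : V) ≠ 0 := by simpa using hx
  obtain ⟨W, ⟨hWH, hxW⟩, huniq⟩ := hH x x.2 hx'
  have hxW' : x ∈ W.comap U.subtype := hxW
  refine ⟨W.comap U.subtype, ⟨mem_erase.2 ⟨?_, mem_image_of_mem _ hWH⟩, hxW'⟩, ?_⟩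
  · exact (Submodule.ne_bot_iff _).2 ⟨x, hxW', hx⟩
  · rintro Y ⟨hY, hxY⟩
    obtain ⟨W', hW'H, rfl⟩ := mem_image.1 (mem_erase.1 hY).2
    rw [huniq W' ⟨hW'H, hxY⟩]

theorem exists_le_of_top_mem_traceOn {H : Finset (Submodule F V)} {U : Submodule F V}
    (h : ⊤ ∈ traceOn H U) : ∃ W ∈ H, U ≤ W := by
  obtain ⟨W, hW, hWU⟩ := mem_image.1 (mem_erase.1 h).2
  exact ⟨W, hW, Submodule.comap_subtype_eq_top.1 hWU⟩

end

/-- If the `t`-dimensional members of the partition can be completed to a `t`-spread,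
then `a ≥ min(m_d, q^⌈d/2⌉ + 1)`. -/
theorem stmt10 (q t d : ℕ) (F V : Type*) [Field F] [Fintype F] [AddCommGroup V]
    [Module F V] [FiniteDimensional F V] (hq : Fintype.card F = q)
    (hV : Module.finrank F V = 2 * t)
    (P : Finset (Submodule F V)) (hP : IsVSPartition F P)
    (a : ℤ) (ha : (dimCount F P t : ℤ) = (q : ℤ) ^ t + 1 - a)
    (hd1 : t < 2 * d) (hd2 : d < t)
    (hS : ∃ S : Finset (Submodule F V), IsSpread F t S ∧
      ∀ U ∈ P, Module.finrank F ↥U = t → U ∈ S) :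
    min ((dimCount F P d : ℤ)) ((q : ℤ) ^ ((d + 1) / 2) + 1) ≤ a := by
  obtain ⟨S, hS, hPS⟩ := hS
  subst hq
  have hholes : (#(S \ P) : ℤ) = a := by
    have := hS.1.card_sdiff_add_dimCount hPS
    rw [hS.card_eq hV (by omega)] at this
    have := congrArg (Nat.cast : ℕ → ℤ) this
    push_cast at this
    linarith
  rw [← hholes]
  by_cases hcov : ∀ U ∈ P, finrank F U = d → ∃ W ∈ S \ P, U ≤ W
  · refine min_le_of_left_le (Nat.cast_le.2 (hP.dimCount_le_card (fun W hW => ?_) hcov))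
    rw [hS.1.1 W (mem_sdiff.1 hW).1]
    exact hd1
  · push Not at hcov
    obtain ⟨U, hUP, hUd, hUholes⟩ := hcov
    have hUS : U ∉ S := fun hUS => by have := hS.1.1 U hUS; omega
    have hpart := isVSPartition_traceOn fun v hv hv0 =>
      hP.existsUnique_mem_sdiff hS.2 hUP hUS hv hv0
    have htop : ⊤ ∉ traceOn (S \ P) U := fun h => by
      obtain ⟨W, hW, hUW⟩ := exists_le_of_top_mem_traceOn h
      exact hUholes W hW hUW
    have hbound := hpart.pow_add_one_le_card htop (by omega)
    rw [hUd] at hbound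
    exact min_le_of_right_le (by exact_mod_cast hbound.trans (card_traceOn_le _ _))
end

section
/- Let P be a vector space partition of a 2t-dimensional vector space V over the finite field F with q elements, and let a be the integer with m_t = q^t + 1 − a. Then for every integer d with 1 ≤ d ≤ t − 1 and every integer x with 1 ≤ x ≤ m_d and x < (q^t − 1)/(q^{t−d} − 1), the inequality a ≥ x − R_q(t, d, x) holds, as an inequality of rational numbers. -/
attribute [local instance] Classical.propDecidable

/-- The rational number `R_q(t, d, m)`. -/
def Rq (q t d m : ℕ) : ℚ :=
  (m : ℚ) * ((m : ℚ) - 1) *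
      (((q : ℚ) ^ (2 * t - 2 * d) - 1) / 2 + 1 - (q : ℚ) ^ (t - d)) /
    ((q : ℚ) ^ t - 1 - (m : ℚ) * ((q : ℚ) ^ (t - d) - 1))


/-! Dualize: each hyperplane `H ⊇ S` is the kernel of exactly `q - 1` nonzero functionals
vanishing on `S`, so counting such functionals counts hyperplanes without dividing by `q - 1`.
Two distinct `t`-dimensional members of `P` span `V`, so no hyperplane contains two of them;
hence `(q - 1)` times the number of hyperplanes containing no `t`-dimensional member is
`q^{2t} - 1 - m_t (q^t - 1)`, and among them those through a `d`-dimensional member `U` give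
`q^{2t-d} - 1 - m_t (q^{t-d} - 1)`. Two distinct `d`-dimensional members span a `2d`-space, which
lies in `(q^{2t-2d} - 1)/(q - 1)` hyperplanes. The Bonferroni inequality
`2 ∑ |A_i| ≤ 2 |⋃ A_i| + ∑_{i ≠ j} |A_i ∩ A_j|` for the sets of such hyperplanes through `x` of
the `d`-dimensional members gives a quadratic inequality in `x`, which rearranges to
`a ≥ x - R_q(t, d, x)` because `q^t - 1 - x (q^{t-d} - 1) > 0`. -/

open Module Finset Submodule

theorem Finset.two_mul_sum_card_le_two_mul_card_biUnion_add_sum_card_inter {α ι : Type*}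
    [DecidableEq α] [DecidableEq ι] (s : Finset ι) (A : ι → Finset α) :
    2 * ∑ i ∈ s, #(A i) ≤ 2 * #(s.biUnion A) + ∑ p ∈ s.offDiag, #(A p.1 ∩ A p.2) := by
  induction s using Finset.induction_on with
  | empty => simp
  | @insert k s hk ih =>
    have hunion : #(A k) + #(s.biUnion A) = #(A k ∪ s.biUnion A) + #(A k ∩ s.biUnion A) :=
      (card_union_add_card_inter _ _).symm
    have hinter : #(A k ∩ s.biUnion A) ≤ ∑ j ∈ s, #(A k ∩ A j) := by
      rw [inter_biUnion]; exact card_biUnion_le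
    have hoffDiag : ∑ p ∈ (insert k s).offDiag, #(A p.1 ∩ A p.2) =
        ∑ p ∈ s.offDiag, #(A p.1 ∩ A p.2) + 2 * ∑ j ∈ s, #(A k ∩ A j) := by
      rw [offDiag_insert hk, sum_union, sum_union, sum_product, sum_product_right]
      · simp only [sum_singleton, inter_comm (A _) (A k)]; ring
      · exact disjoint_left.2 fun p hp hp' => by
          simp only [mem_offDiag, mem_product, mem_singleton] at hp hp'; exact hk (hp'.1 ▸ hp.1)
      · exact disjoint_left.2 fun p hp hp' => by
          simp only [mem_union, mem_offDiag, mem_product, mem_singleton] at hp hp'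
          rcases hp with hp | hp
          · exact hk (hp'.2 ▸ hp.2.1)
          · exact hk (hp'.2 ▸ hp.2)
    rw [sum_insert hk, biUnion_insert, hoffDiag]
    omega

section NonzeroVectors

variable {R E : Type*}

noncomputable def Submodule.nonzeroVectors [Semiring R] [AddCommMonoid E] [Module R E]
    [Fintype E] (X : Submodule R E) : Finset E :=
  {v | v ∈ X ∧ v ≠ 0}

namespace Submodule

section Semiring

variable [Semiring R] [AddCommMonoid E] [Module R E] [Fintype E]

@[simp]
theorem mem_nonzeroVectors {X : Submodule R E} {v : E} :
    v ∈ X.nonzeroVectors ↔ v ∈ X ∧ v ≠ 0 := by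
  simp [nonzeroVectors]

theorem nonzeroVectors_inf (X Y : Submodule R E) :
    (X ⊓ Y).nonzeroVectors = X.nonzeroVectors ∩ Y.nonzeroVectors := by
  ext v; simp only [mem_nonzeroVectors, mem_inf, Finset.mem_inter]; tauto

theorem disjoint_nonzeroVectors {X Y : Submodule R E} (h : Disjoint X Y) :
    Disjoint X.nonzeroVectors Y.nonzeroVectors :=
  disjoint_left.2 fun v hX hY => (mem_nonzeroVectors.1 hX).2 <|
    disjoint_def.1 h v (mem_nonzeroVectors.1 hX).1 (mem_nonzeroVectors.1 hY).1

theorem card_filter_nonzeroVectors_add_sum {ι : Type*} (X : Submodule R E) (T : Finset ι)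
    (Y : ι → Submodule R E) (hY : (T : Set ι).Pairwise fun i j => Disjoint (Y i) (Y j)) :
    #{v ∈ X.nonzeroVectors | ∀ i ∈ T, v ∉ Y i} + ∑ i ∈ T, #(X ⊓ Y i).nonzeroVectors =
      #X.nonzeroVectors := by
  have hcover : {v ∈ X.nonzeroVectors | ¬ ∀ i ∈ T, v ∉ Y i} =
      T.biUnion fun i => (X ⊓ Y i).nonzeroVectors := by
    ext v; simp only [Finset.mem_filter, mem_nonzeroVectors, Finset.mem_biUnion, mem_inf]
    push Not; tauto
  rw [← card_biUnion fun i hi j hj hij => disjoint_nonzeroVectors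
    ((hY hi hj hij).mono inf_le_right inf_le_right), ← hcover, card_filter_add_card_filter_not]

end Semiring

theorem card_nonzeroVectors_add_one [DivisionRing R] [Fintype R] [AddCommGroup E] [Module R E]
    [Fintype E] (X : Submodule R E) :
    #X.nonzeroVectors + 1 = Fintype.card R ^ finrank R X := by
  have : X.nonzeroVectors = ({v | v ∈ X} : Finset E).erase 0 := by
    ext v; simp [and_comm]
  rw [this, card_erase_add_one (by simp), ← card_eq_pow_finrank, Fintype.card_subtype]

end Submodule

end NonzeroVectors

section Hyperplanes

variable {F V : Type*} [Field F] [AddCommGroup V] [Module F V]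

theorem IsVSPartition.disjoint_s19 {P : Finset (Submodule F V)} (hP : IsVSPartition F P)
    {U W : Submodule F V} (hU : U ∈ P) (hW : W ∈ P) (hUW : U ≠ W) : Disjoint U W := by
  refine disjoint_def.2 fun v hvU hvW => by_contra fun hv => hUW ?_
  obtain ⟨X, -, hX⟩ := hP.2 v hv
  exact (hX U ⟨hU, hvU⟩).trans (hX W ⟨hW, hvW⟩).symm

theorem Submodule.finrank_sup_of_disjoint {U W : Submodule F V} [FiniteDimensional F U]
    [FiniteDimensional F W] (h : Disjoint U W) :
    finrank F ↥(U ⊔ W) = finrank F U + finrank F W := by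
  rw [← finrank_sup_add_finrank_inf_eq, h.eq_bot, finrank_bot, add_zero]

theorem IsVSPartition.pairwise_sup_eq_top [FiniteDimensional F V] {P : Finset (Submodule F V)}
    (hP : IsVSPartition F P) {t : ℕ} (hV : finrank F V = 2 * t) :
    (({W ∈ P | finrank F W = t} : Finset (Submodule F V)) : Set (Submodule F V)).Pairwise
      (· ⊔ · = ⊤) := fun W hW W' hW' h => by
  obtain ⟨hWP, hWt⟩ := mem_filter.1 hW
  obtain ⟨hW'P, hW't⟩ := mem_filter.1 hW'
  exact eq_top_of_disjoint W W' (by omega) (hP.disjoint_s19 hWP hW'P h)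

variable [Fintype (Dual F V)]

noncomputable def avoidingFunctionals (T : Finset (Submodule F V)) (S : Submodule F V) :
    Finset (Dual F V) :=
  {φ ∈ S.dualAnnihilator.nonzeroVectors | ∀ W ∈ T, φ ∉ W.dualAnnihilator}

theorem avoidingFunctionals_sup (T : Finset (Submodule F V)) (S S' : Submodule F V) :
    avoidingFunctionals T (S ⊔ S') = avoidingFunctionals T S ∩ avoidingFunctionals T S' := by
  rw [avoidingFunctionals, dualAnnihilator_sup_eq, nonzeroVectors_inf, filter_inter_distrib]
  rfl

theorem avoidingFunctionals_anti (T : Finset (Submodule F V)) {S S' : Submodule F V}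
    (h : S ≤ S') : avoidingFunctionals T S' ⊆ avoidingFunctionals T S := by
  rw [← sup_eq_right.2 h, avoidingFunctionals_sup]
  exact inter_subset_left

variable [Fintype F] [FiniteDimensional F V]

theorem card_nonzeroVectors_dualAnnihilator (S : Submodule F V) :
    (#S.dualAnnihilator.nonzeroVectors : ℚ) =
      (Fintype.card F : ℚ) ^ (finrank F V - finrank F S) - 1 := by
  rw [eq_sub_iff_add_eq, ← Subspace.finrank_add_finrank_dualAnnihilator_eq S,
    Nat.add_sub_cancel_left]
  exact_mod_cast card_nonzeroVectors_add_one _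

theorem card_avoidingFunctionals_le (T : Finset (Submodule F V)) (S : Submodule F V) :
    (#(avoidingFunctionals T S) : ℚ) ≤
      (Fintype.card F : ℚ) ^ (finrank F V - finrank F S) - 1 := by
  rw [← card_nonzeroVectors_dualAnnihilator]
  exact_mod_cast card_le_card (filter_subset _ _)

theorem card_avoidingFunctionals {T : Finset (Submodule F V)} {t : ℕ}
    (hT : ∀ W ∈ T, finrank F W = t) (hTT : (T : Set (Submodule F V)).Pairwise (· ⊔ · = ⊤))
    {S : Submodule F V} (hS : ∀ W ∈ T, Disjoint S W) :
    (#(avoidingFunctionals T S) : ℚ) =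
      (Fintype.card F : ℚ) ^ (finrank F V - finrank F S) - 1 -
        #T * ((Fintype.card F : ℚ) ^ (finrank F V - (finrank F S + t)) - 1) := by
  have hdisj : (T : Set (Submodule F V)).Pairwise
      fun W W' => Disjoint W.dualAnnihilator W'.dualAnnihilator := fun W hW W' hW' h =>
    disjoint_iff.2 <| by rw [← dualAnnihilator_sup_eq, hTT hW hW' h, dualAnnihilator_top]
  have h := card_filter_nonzeroVectors_add_sum S.dualAnnihilator T _ hdisj
  rw [← Nat.cast_inj (R := ℚ), Nat.cast_add, Nat.cast_sum] at h
  rw [avoidingFunctionals, eq_sub_iff_add_eq, ← card_nonzeroVectors_dualAnnihilator, ← h,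
    ← nsmul_eq_mul, ← sum_const]
  refine congrArg _ (sum_congr rfl fun W hW => ?_)
  rw [← dualAnnihilator_sup_eq, card_nonzeroVectors_dualAnnihilator,
    finrank_sup_of_disjoint (hS W hW), hT W hW]

end Hyperplanes

theorem IsVSPartition.hyperplane_bonferroni {F V : Type*} [Field F] [Fintype F] [AddCommGroup V]
    [Module F V] [FiniteDimensional F V] {P : Finset (Submodule F V)} (hP : IsVSPartition F P)
    {q t d : ℕ} (hq : Fintype.card F = q) (hV : finrank F V = 2 * t) (hdt : d < t)
    {X : Finset (Submodule F V)} (hX : X ⊆ {U ∈ P | finrank F U = d}) :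
    2 * #X * ((q : ℚ) ^ (2 * t - d) - 1 - dimCount F P t * ((q : ℚ) ^ (t - d) - 1)) ≤
      2 * ((q : ℚ) ^ (2 * t) - 1 - dimCount F P t * ((q : ℚ) ^ t - 1)) +
        #X * (#X - 1) * ((q : ℚ) ^ (2 * t - 2 * d) - 1) := by
  have : Finite (Dual F V) := Module.finite_of_finite F
  let _ : Fintype (Dual F V) := Fintype.ofFinite _
  subst hq
  set T : Finset (Submodule F V) := {W ∈ P | finrank F W = t}
  have hm : dimCount F P t = #T := rfl
  have hT : ∀ W ∈ T, finrank F W = t := fun W hW => (mem_filter.1 hW).2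
  have hTT := hP.pairwise_sup_eq_top hV
  set A := avoidingFunctionals T
  have hfree := card_avoidingFunctionals hT hTT (S := ⊥) (by simp)
  simp only [finrank_bot, Nat.sub_zero, zero_add, hV, show 2 * t - t = t by omega] at hfree
  have hA : ∀ U ∈ X, (#(A U) : ℚ) =
      (Fintype.card F : ℚ) ^ (2 * t - d) - 1 - #T * ((Fintype.card F : ℚ) ^ (t - d) - 1) := by
    intro U hU
    obtain ⟨hUP, hUd⟩ := mem_filter.1 (hX hU)
    have hUT : ∀ W ∈ T, Disjoint U W := fun W hW =>
      hP.disjoint_s19 hUP (mem_filter.1 hW).1 fun h => by have := hT W hW; subst h; omega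
    rw [card_avoidingFunctionals hT hTT hUT, hV, hUd, show 2 * t - (d + t) = t - d by omega]
  have hpair : ∀ p ∈ X.offDiag, (#(A p.1 ∩ A p.2) : ℚ) ≤
      (Fintype.card F : ℚ) ^ (2 * t - 2 * d) - 1 := by
    intro p hp
    obtain ⟨h1, h2, hne⟩ := mem_offDiag.1 hp
    obtain ⟨hP1, hd1⟩ := mem_filter.1 (hX h1)
    obtain ⟨hP2, hd2⟩ := mem_filter.1 (hX h2)
    have := card_avoidingFunctionals_le T (p.1 ⊔ p.2)
    rwa [avoidingFunctionals_sup, finrank_sup_of_disjoint (hP.disjoint_s19 hP1 hP2 hne), hd1, hd2, hV,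
      ← two_mul] at this
  have hunion : (#(X.biUnion A) : ℚ) ≤ #(A ⊥) := by
    exact_mod_cast card_le_card <| biUnion_subset.2 fun U _ => avoidingFunctionals_anti T bot_le
  have hbonf : 2 * ∑ U ∈ X, (#(A U) : ℚ) ≤
      2 * #(X.biUnion A) + ∑ p ∈ X.offDiag, (#(A p.1 ∩ A p.2) : ℚ) := by
    exact_mod_cast two_mul_sum_card_le_two_mul_card_biUnion_add_sum_card_inter X A
  rw [sum_congr rfl hA, sum_const, nsmul_eq_mul] at hbonf
  have hoffDiag := sum_le_sum hpair
  rw [sum_const, nsmul_eq_mul, offDiag_card, Nat.cast_sub (Nat.le_mul_self _),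
    Nat.cast_mul] at hoffDiag
  rw [hm]
  linarith

theorem sub_Rq_le_of_two_mul_le {q t d x : ℕ} {m a : ℚ} (hq : 2 ≤ q) (hdt : d < t)
    (hx : (x : ℚ) < ((q : ℚ) ^ t - 1) / ((q : ℚ) ^ (t - d) - 1)) (hm : m = q ^ t + 1 - a)
    (h : 2 * x * ((q : ℚ) ^ (2 * t - d) - 1 - m * ((q : ℚ) ^ (t - d) - 1)) ≤
      2 * ((q : ℚ) ^ (2 * t) - 1 - m * ((q : ℚ) ^ t - 1)) +
        x * (x - 1) * ((q : ℚ) ^ (2 * t - 2 * d) - 1)) :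
    (x : ℚ) - Rq q t d x ≤ a := by
  have hY : 1 < (q : ℚ) ^ (t - d) := one_lt_pow₀ (by exact_mod_cast hq) (by omega)
  have hD : 0 < (q : ℚ) ^ t - 1 - x * ((q : ℚ) ^ (t - d) - 1) := by
    rw [lt_div_iff₀ (by linarith)] at hx; linarith
  have e1 : (q : ℚ) ^ (2 * t) = ((q : ℚ) ^ t) ^ 2 := by rw [← pow_mul, mul_comm]
  have e2 : (q : ℚ) ^ (2 * t - d) = (q : ℚ) ^ t * (q : ℚ) ^ (t - d) := by
    rw [← pow_add]; congr 1; omega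
  have e3 : (q : ℚ) ^ (2 * t - 2 * d) = ((q : ℚ) ^ (t - d)) ^ 2 := by
    rw [← pow_mul]; congr 1; omega
  rw [e1, e2, e3, hm] at h
  rw [Rq, e3, sub_le_comm, le_div_iff₀ hD]
  linear_combination h / 2

/-- Theorem: for every `1 ≤ d ≤ t - 1` and every `1 ≤ x ≤ m_d` with
`x < (q^t - 1)/(q^{t-d} - 1)`, the inequality `a ≥ x - R_q(t, d, x)` holds. -/
theorem stmt19 (q t : ℕ) (F V : Type*) [Field F] [Fintype F] [AddCommGroup V]
    [Module F V] [FiniteDimensional F V] (hq : Fintype.card F = q)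
    (hV : Module.finrank F V = 2 * t)
    (P : Finset (Submodule F V)) (hP : IsVSPartition F P)
    (a : ℤ) (ha : (dimCount F P t : ℤ) = (q : ℤ) ^ t + 1 - a) :
    ∀ d x : ℕ, 1 ≤ d → d ≤ t - 1 → 1 ≤ x → x ≤ dimCount F P d →
      (x : ℚ) < ((q : ℚ) ^ t - 1) / ((q : ℚ) ^ (t - d) - 1) →
      (x : ℚ) - Rq q t d x ≤ (a : ℚ) := by
  intro d x hd hdt _ hxle hxlt
  obtain ⟨X, hX, rfl⟩ := exists_subset_card_eq hxle
  have hm : (dimCount F P t : ℚ) = q ^ t + 1 - a := by exact_mod_cast ha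
  exact sub_Rq_le_of_two_mul_le (hq ▸ Fintype.one_lt_card) (by omega) hxlt hm
    (hP.hyperplane_bonferroni hq hV (by omega) hX)
end
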